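/- Consider the POVM elements E₀ = (1/2)[π₀⊗(π₀+π₊) + π₁⊗(π₁+π₋)] and E₁ = I − E₀ on a two-qubit space, where π₀, π₁ are computational-basis projectors and π₊, π₋ are Hadamard-basis projectors. Then the operator norm of E₀ and of E₁ equals cos²(π/8), and hence for any state ρ, max(tr(E₀ρ), tr(E₁ρ)) ≤ cos²(π/8), i.e., the measurement outcome has min-entropy at least −log₂ cos²(π/8). -/

import Mathlib

open Matrix
open scoped Kronecker ComplexOrder

noncomputable def pi0 : Matrix (Fin 2) (Fin 2) ℂ := !![1, 0; 0, 0]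
noncomputable def pi1 : Matrix (Fin 2) (Fin 2) ℂ := !![0, 0; 0, 1]
noncomputable def piPlus : Matrix (Fin 2) (Fin 2) ℂ := !![1/2, 1/2; 1/2, 1/2]
noncomputable def piMinus : Matrix (Fin 2) (Fin 2) ℂ := !![1/2, -1/2; -1/2, 1/2]

noncomputable def E0 : Matrix (Fin 2 × Fin 2) (Fin 2 × Fin 2) ℂ :=
  (1/2 : ℂ) • (pi0 ⊗ₖ (pi0 + piPlus) + pi1 ⊗ₖ (pi1 + piMinus))

noncomputable def E1 : Matrix (Fin 2 × Fin 2) (Fin 2 × Fin 2) ℂ := 1 - E0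

/-!
Write `D = E0 - E1 = ½ Z ⊗ (Z + X)`. Since `(Z + X)² = 2`, `Dᴴ D = ½`, so in the C⋆-algebra of
matrices with the L2 operator norm `‖D‖ = √2 / 2`. As `E0 = ½ (1 + D)` and `E1 = ½ (1 - D)`, the
triangle inequality gives `‖Eₖ‖ ≤ ½ + √2 / 4 = cos² (π / 8)`, and the bound is attained on
`eₖ ⊗ (cos (π / 8), sin (π / 8))`. Finally a Hermitian `A` satisfies `A ≤ ‖A‖ • 1` in the Loewner
order, so `tr (A ρ) ≤ ‖A‖` for every density matrix `ρ`.
-/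

open scoped MatrixOrder Matrix.Norms.L2Operator

namespace Matrix

variable {𝕜 n : Type*} [RCLike 𝕜] [Fintype n] [DecidableEq n]

lemma norm_le_l2_opNorm_of_mulVec_eq_smul {A : Matrix n n 𝕜} {c : 𝕜} {u : n → 𝕜}
    (hu : u ≠ 0) (hAu : A *ᵥ u = c • u) : ‖c‖ ≤ ‖A‖ := by
  have hu' : WithLp.toLp 2 u ≠ 0 := by simpa using hu
  have := (toEuclideanCLM (n := n) (𝕜 := 𝕜) A).ratio_le_opNorm (WithLp.toLp 2 u)
  rwa [toEuclideanCLM_toLp, hAu, WithLp.toLp_smul, norm_smul,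
    mul_div_cancel_right₀ _ (norm_ne_zero_iff.mpr hu')] at this

lemma l2_opNorm_eq_of_le_of_mulVec_eq_smul {A : Matrix n n 𝕜} {c : ℝ} {u : n → 𝕜} (hc : 0 ≤ c)
    (hle : ‖A‖ ≤ c) (hu : u ≠ 0) (hAu : A *ᵥ u = (c : 𝕜) • u) : ‖A‖ = c := by
  refine le_antisymm hle ?_
  simpa [RCLike.norm_of_nonneg hc] using norm_le_l2_opNorm_of_mulVec_eq_smul hu hAu

lemma PosSemidef.trace_mul_nonneg {A B : Matrix n n 𝕜} (hA : A.PosSemidef) (hB : B.PosSemidef) :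
    0 ≤ (A * B).trace := by
  obtain ⟨C, rfl⟩ := CStarAlgebra.nonneg_iff_eq_star_mul_self.mp hA.nonneg
  rw [star_eq_conjTranspose, Matrix.mul_assoc, trace_mul_comm]
  exact (hB.mul_mul_conjTranspose_same C).trace_nonneg

lemma re_trace_mul_le_l2_opNorm {A ρ : Matrix n n ℂ} (hA : A.IsHermitian) (hρ : ρ.PosSemidef)
    (htr : ρ.trace = 1) : (A * ρ).trace.re ≤ ‖A‖ := by
  have hle : A ≤ algebraMap ℝ _ ‖A‖ := hA.isSelfAdjoint.le_algebraMap_norm_self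
  have := (le_iff.mp hle).trace_mul_nonneg hρ
  rw [sub_mul, trace_sub, Algebra.algebraMap_eq_smul_one, smul_mul_assoc, one_mul, trace_smul,
    htr] at this
  simpa using Complex.re_le_re this

end Matrix

lemma norm_half_smul_one_add_le {𝕜 A : Type*} [RCLike 𝕜] [NormedRing A] [NormedAlgebra 𝕜 A]
    [NormOneClass A] (x : A) : ‖(1 / 2 : 𝕜) • (1 + x)‖ ≤ 1 / 2 + ‖x‖ / 2 := by
  calc ‖(1 / 2 : 𝕜) • (1 + x)‖ = ‖1 + x‖ / 2 := by rw [norm_smul]; norm_num; ring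
    _ ≤ (‖(1 : A)‖ + ‖x‖) / 2 := by gcongr; exact norm_add_le _ _
    _ = 1 / 2 + ‖x‖ / 2 := by rw [norm_one]; ring

lemma cos_sq_pi_div_eight : Real.cos (Real.pi / 8) ^ 2 = 1 / 2 + √2 / 4 := by
  rw [Real.cos_sq, show 2 * (Real.pi / 8) = Real.pi / 4 by ring, Real.cos_pi_div_four]
  ring

lemma Complex.ofReal_sqrt_two_sq : (√2 : ℂ) ^ 2 = 2 := by
  rw [← Complex.ofReal_pow, Real.sq_sqrt zero_le_two]
  norm_num

lemma isHermitian_E0 : E0.IsHermitian := by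
  ext ⟨i, j⟩ ⟨k, l⟩
  fin_cases i <;> fin_cases j <;> fin_cases k <;> fin_cases l <;>
    simp [E0, pi0, pi1, piPlus, piMinus]

lemma conjTranspose_E0_sub_E1_mul_self : (E0 - E1)ᴴ * (E0 - E1) = (1 / 2 : ℂ) • 1 := by
  ext ⟨i, j⟩ ⟨k, l⟩
  fin_cases i <;> fin_cases j <;> fin_cases k <;> fin_cases l <;>
    simp [E1, E0, pi0, pi1, piPlus, piMinus, mul_apply, Fintype.sum_prod_type, one_apply,
      map_ofNat] <;>
    ring

lemma norm_E0_sub_E1 : ‖E0 - E1‖ = √2 / 2 := by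
  have h := congrArg norm conjTranspose_E0_sub_E1_mul_self
  rw [← star_eq_conjTranspose, CStarRing.norm_star_mul_self, norm_smul, norm_one] at h
  refine (sq_eq_sq₀ (norm_nonneg _) (by positivity)).mp ?_
  rw [sq, h, div_pow, Real.sq_sqrt zero_le_two]
  norm_num

lemma E0_eq_half_smul_one_add : E0 = (1 / 2 : ℂ) • (1 + (E0 - E1)) := by
  rw [E1]; module

lemma E1_eq_half_smul_one_add_neg : E1 = (1 / 2 : ℂ) • (1 + -(E0 - E1)) := by
  rw [E1]; module

-- `(1, √2 - 1)` is proportional to `(cos (π / 8), sin (π / 8))`.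
noncomputable def topEigenvector (i : Fin 2) : Fin 2 × Fin 2 → ℂ :=
  fun p => if p.1 = i then ![1, (√2 : ℂ) - 1] p.2 else 0

lemma topEigenvector_ne_zero (i : Fin 2) : topEigenvector i ≠ 0 :=
  fun h => by simpa [topEigenvector] using congrFun h (i, 0)

lemma E0_mulVec_topEigenvector :
    E0 *ᵥ topEigenvector 0 = ((1 / 2 + √2 / 4 : ℝ) : ℂ) • topEigenvector 0 := by
  ext ⟨i, j⟩
  fin_cases i <;> fin_cases j <;>
    simp [E0, pi0, pi1, piPlus, piMinus, topEigenvector, mulVec, dotProduct,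
      Fintype.sum_prod_type] <;>
    grind [Complex.ofReal_sqrt_two_sq]

lemma E1_mulVec_topEigenvector :
    E1 *ᵥ topEigenvector 1 = ((1 / 2 + √2 / 4 : ℝ) : ℂ) • topEigenvector 1 := by
  ext ⟨i, j⟩
  fin_cases i <;> fin_cases j <;>
    simp [E1, E0, pi0, pi1, piPlus, piMinus, topEigenvector, mulVec, dotProduct,
      Fintype.sum_prod_type, one_apply] <;>
    grind [Complex.ofReal_sqrt_two_sq]

lemma norm_E0 : ‖E0‖ = 1 / 2 + √2 / 4 := by
  refine l2_opNorm_eq_of_le_of_mulVec_eq_smul (by positivity) ?_ (topEigenvector_ne_zero 0)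
    E0_mulVec_topEigenvector
  calc ‖E0‖ = ‖(1 / 2 : ℂ) • (1 + (E0 - E1))‖ := by rw [← E0_eq_half_smul_one_add]
    _ ≤ 1 / 2 + ‖E0 - E1‖ / 2 := norm_half_smul_one_add_le _
    _ = 1 / 2 + √2 / 4 := by rw [norm_E0_sub_E1]; ring

lemma norm_E1 : ‖E1‖ = 1 / 2 + √2 / 4 := by
  refine l2_opNorm_eq_of_le_of_mulVec_eq_smul (by positivity) ?_ (topEigenvector_ne_zero 1)
    E1_mulVec_topEigenvector
  calc ‖E1‖ = ‖(1 / 2 : ℂ) • (1 + -(E0 - E1))‖ := by rw [← E1_eq_half_smul_one_add_neg]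
    _ ≤ 1 / 2 + ‖-(E0 - E1)‖ / 2 := norm_half_smul_one_add_le _
    _ = 1 / 2 + √2 / 4 := by rw [norm_neg, norm_E0_sub_E1]; ring

theorem povm_opNorm_and_min_entropy :
    ‖Matrix.toEuclideanCLM (𝕜 := ℂ) E0‖ = Real.cos (Real.pi / 8) ^ 2 ∧
    ‖Matrix.toEuclideanCLM (𝕜 := ℂ) E1‖ = Real.cos (Real.pi / 8) ^ 2 ∧
    ∀ ρ : Matrix (Fin 2 × Fin 2) (Fin 2 × Fin 2) ℂ,
      ρ.PosSemidef → ρ.trace = 1 →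
        max ((E0 * ρ).trace.re) ((E1 * ρ).trace.re) ≤ Real.cos (Real.pi / 8) ^ 2 := by
  rw [← cstar_norm_def, ← cstar_norm_def, norm_E0, norm_E1, cos_sq_pi_div_eight]
  refine ⟨rfl, rfl, fun ρ hρ htr => max_le ?_ ?_⟩
  · exact (re_trace_mul_le_l2_opNorm isHermitian_E0 hρ htr).trans_eq norm_E0
  · exact (re_trace_mul_le_l2_opNorm (isHermitian_one.sub isHermitian_E0) hρ htr).trans_eq norm_E1
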